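/- arXiv:1808.03068 — 5 statements merged into one kernel-verified Lean document; each statement's English description precedes it below -/
import Mathlib

section
/- Let n ≥ 1 and let χ be a primitive Dirichlet character modulo n (with complex values). Let l ≥ 1 be an integer such that χ and l have the same parity, i.e. χ(−1) = (−1)^l. Then the analytically continued Dirichlet L-function of χ satisfies L(χ, 1−l) ≠ 0. -/
/-!
Combine the functional equation `Λ(χ, 1 - l) = n ^ (l - 1/2) ε(χ) Λ(χ⁻¹, l)` with
`L(χ, 1 - l) = Λ(χ, 1 - l) / Γ_χ(1 - l)`. The root number `ε(χ)` is nonzero because the Gauss sum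
of a primitive character is (otherwise the Fourier transform of `χ` would vanish), and
`Λ(χ⁻¹, l) ≠ 0` because `L(χ⁻¹, s)` does not vanish for `Re s ≥ 1`. The parity
condition is exactly what keeps `1 - l` away from the poles of the Gamma factor `Γ_χ` (where
`Gammaℝ` takes the junk value `0`), which would otherwise produce a trivial zero of `L`.
-/

open Complex ZMod

lemma Complex.Gammaℝ_natCast_sub_natCast_ne_zero {j l : ℕ} (h : Odd (j + l)) :
    Gammaℝ (j - l) ≠ 0 := by
  rw [Ne, Gammaℝ_eq_zero_iff]
  rintro ⟨m, hm⟩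
  have hl : l = j + 2 * m := by exact_mod_cast (by linear_combination -hm : (l : ℂ) = j + 2 * m)
  obtain ⟨k, hk⟩ := h
  omega

namespace DirichletCharacter

variable {N : ℕ}

lemma Odd.ne_one {S : Type*} [CommRing S] [NeZero (2 : S)] {χ : DirichletCharacter S N}
    (hχ : χ.Odd) : χ ≠ 1 := by
  rintro rfl
  exact Odd.not_even _ hχ (MulChar.one_apply isUnit_one.neg)

lemma gammaFactor_one_sub_natCast_ne_zero {χ : DirichletCharacter ℂ N} {l : ℕ}
    (hpar : χ (-1) = (-1) ^ l) : gammaFactor χ (1 - l) ≠ 0 := by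
  have hneg : (-1 : ℂ) ≠ 1 := by norm_num
  rcases χ.even_or_odd with hχ | hχ
  · have hl : _root_.Even l := (neg_one_pow_eq_one_iff_even hneg).mp (hpar.symm.trans hχ)
    rw [hχ.gammaFactor_def]
    exact_mod_cast Gammaℝ_natCast_sub_natCast_ne_zero (j := 1) hl.one_add
  · have hl : _root_.Odd l := (neg_one_pow_eq_neg_one_iff_odd hneg).mp (hpar.symm.trans hχ)
    rw [hχ.gammaFactor_def, show 1 - (l : ℂ) + 1 = (2 : ℕ) - l by push_cast; ring]
    exact Gammaℝ_natCast_sub_natCast_ne_zero (even_two.add_odd hl)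

lemma IsPrimitive.gaussSum_ne_zero [NeZero N] {χ : DirichletCharacter ℂ N} (hχ : χ.IsPrimitive) :
    gaussSum χ stdAddChar ≠ 0 := by
  intro h
  have hF : 𝓕 (χ : ZMod N → ℂ) = 0 := by
    ext k
    simp [hχ.fourierTransform_eq_inv_mul_gaussSum, h]
  simpa using congrFun ((map_eq_zero_iff _ dft.injective).mp hF) 1

lemma IsPrimitive.rootNumber_ne_zero [NeZero N] {χ : DirichletCharacter ℂ N}
    (hχ : χ.IsPrimitive) : rootNumber χ ≠ 0 := by
  rw [rootNumber]
  refine div_ne_zero (div_ne_zero hχ.gaussSum_ne_zero (pow_ne_zero _ I_ne_zero)) ?_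
  simp [NeZero.ne N]

lemma completedLFunction_ne_zero_of_one_le_re [NeZero N] (χ : DirichletCharacter ℂ N) {s : ℂ}
    (hχs : χ ≠ 1 ∨ s ≠ 1) (hs : 1 ≤ s.re) : completedLFunction χ s ≠ 0 := by
  have hs₀ : s ≠ 0 := by rintro rfl; norm_num at hs
  have hL := LFunction_ne_zero_of_one_le_re χ hχs hs
  rw [LFunction_eq_completed_div_gammaFactor χ s (.inl hs₀)] at hL
  exact (div_ne_zero_iff.mp hL).1

end DirichletCharacter

open DirichletCharacter in
theorem dirichlet_L_ne_zero_of_same_parity_general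
    (n : ℕ) [NeZero n]
    (χ : DirichletCharacter ℂ n) (hχ : χ.IsPrimitive)
    (l : ℕ) (hl : 1 ≤ l) (hpar : χ (-1) = (-1 : ℂ) ^ l) :
    DirichletCharacter.LFunction χ (1 - (l : ℂ)) ≠ 0 := by
  have hχl : χ ≠ 1 ∨ l ≠ 1 := by
    rcases eq_or_ne l 1 with rfl | hl1
    · exact .inl (Odd.ne_one (hpar.trans (pow_one _)))
    · exact .inr hl1
  have hs : 1 - (l : ℂ) ≠ 0 ∨ n ≠ 1 :=
    hχl.symm.imp (fun h ↦ sub_ne_zero.mpr (by exact_mod_cast Ne.symm h))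
      (fun h hn ↦ h (level_one' χ hn))
  rw [LFunction_eq_completed_div_gammaFactor χ _ hs, hχ.completedLFunction_one_sub]
  refine div_ne_zero (mul_ne_zero (mul_ne_zero ?_ hχ.rootNumber_ne_zero) ?_)
    (gammaFactor_one_sub_natCast_ne_zero hpar)
  · simp [NeZero.ne n]
  · exact completedLFunction_ne_zero_of_one_le_re χ⁻¹
      (hχl.imp inv_ne_one.mpr (by exact_mod_cast ·)) (by simpa using hl)

/-- For a primitive Dirichlet character `χ` modulo `n ≥ 1` and an integer `l ≥ 1`
having the same parity as `χ` (i.e. `χ(-1) = (-1)^l`), the analytically continued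
Dirichlet `L`-function satisfies `L(χ, 1 - l) ≠ 0`. -/
theorem dirichlet_L_ne_zero_of_same_parity
    (n : ℕ) [NeZero n] (hn : 1 ≤ n)
    (χ : DirichletCharacter ℂ n) (hχ : χ.IsPrimitive)
    (l : ℕ) (hl : 1 ≤ l) (hpar : χ (-1) = (-1 : ℂ) ^ l) :
    DirichletCharacter.LFunction χ (1 - (l : ℂ)) ≠ 0 :=
  dirichlet_L_ne_zero_of_same_parity_general n χ hχ l hl hpar
end

section
/- Let n ≥ 1 and let χ be a primitive Dirichlet character modulo n. Then for every u ∈ ℤ/nℤ and every s ∈ ℂ with s ≠ 1 one has ∑_{σ ∈ (ℤ/nℤ)ˣ} χ(σ) · ζ_L(e^{2πi uσ/n}, s) = τ(χ) · χ̄(u) · L(χ̄, s), where ζ_L(e^{2πia}, s) denotes the analytic continuation of the Lerch zeta series ∑_{k≥1} e^{2πika} k^{−s} (Mathlib's expZeta evaluated at a and s), L(χ̄,s) denotes the analytically continued Dirichlet L-function of the conjugate character χ̄, and τ(χ) = ∑_{σ ∈ (ℤ/nℤ)ˣ} e^{2πiσ/n} χ(σ) is the Gauss sum of χ. -/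
open Complex HurwitzZeta

/-- Sum of a function weighted by a multiplicative character over units equals the
sum over all of `ZMod n`. -/
lemma mulchar_sum_units {n : ℕ} [NeZero n] (χ : DirichletCharacter ℂ n)
    (f : ZMod n → ℂ) :
    ∑ σ : (ZMod n)ˣ, χ (σ : ZMod n) * f (σ : ZMod n)
      = ∑ a : ZMod n, χ a * f a := by
  classical
  rw [← Finset.sum_filter_of_ne (p := fun a : ZMod n ↦ IsUnit a)
    (f := fun a ↦ χ a * f a) (by
      intro a _ h
      by_contra hu
      exact h (by simp [χ.map_nonunit hu]))]
  exact Finset.sum_bij (fun (σ : (ZMod n)ˣ) _ ↦ (σ : ZMod n))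
    (fun σ _ ↦ Finset.mem_filter.mpr ⟨Finset.mem_univ _, σ.isUnit⟩)
    (fun a _ b _ h ↦ Units.ext h)
    (fun a ha ↦ ⟨(Finset.mem_filter.mp ha).2.unit, Finset.mem_univ _, rfl⟩)
    (fun σ _ ↦ rfl)

/-- Linearity of `ZMod.LFunction` in the function argument. -/
lemma LFunction_weighted_sum {n : ℕ} [NeZero n] {ι : Type*} (t : Finset ι)
    (c : ι → ℂ) (Φ : ι → ZMod n → ℂ) (s : ℂ) :
    ∑ i ∈ t, c i * ZMod.LFunction (Φ i) s
      = ZMod.LFunction (fun j ↦ ∑ i ∈ t, c i * Φ i j) s := by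
  simp only [ZMod.LFunction, Finset.mul_sum, Finset.sum_mul]
  rw [Finset.sum_comm]
  congr 1 with j
  congr 1 with i
  ring

/-- For a primitive Dirichlet character `χ` modulo `n`, every `u : ℤ/nℤ` and every
`s ≠ 1`, one has
`∑_{σ ∈ (ℤ/nℤ)ˣ} χ(σ) ζ_L(e^{2πiuσ/n}, s) = τ(χ) · conj(χ(u)) · L(conj χ, s)`,
where `ζ_L` is the analytically continued Lerch zeta function (`expZeta`),
`L` the analytically continued Dirichlet `L`-function and `τ(χ)` the Gauss sum. -/
theorem gauss_sum_lerch_continuation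
    (n : ℕ) [NeZero n] (hn : 1 ≤ n)
    (χ : DirichletCharacter ℂ n) (hχ : χ.IsPrimitive)
    (u : ZMod n) (s : ℂ) (hs : s ≠ 1) :
    ∑ σ : (ZMod n)ˣ,
        χ (σ : ZMod n) *
          expZeta ((((u * (σ : ZMod n)).val : ℝ) / n : ℝ) : UnitAddCircle) s
      = (∑ σ : (ZMod n)ˣ,
            Complex.exp (2 * Real.pi * Complex.I * (((σ : ZMod n)).val : ℂ) / n) *
              χ (σ : ZMod n)) *
          (starRingEnd ℂ) (χ u) *
          DirichletCharacter.LFunction (χ.ringHomComp (starRingEnd ℂ)) s := by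
  classical
  have hstar : (χ.ringHomComp (starRingEnd ℂ)) = χ⁻¹ := MulChar.star_eq_inv χ
  -- rewrite the Gauss sum on the RHS
  have hgauss : (∑ σ : (ZMod n)ˣ,
      Complex.exp (2 * Real.pi * Complex.I * (((σ : ZMod n)).val : ℂ) / n) *
        χ (σ : ZMod n)) = gaussSum χ ZMod.stdAddChar := by
    rw [gaussSum, ← mulchar_sum_units χ (fun a ↦ ZMod.stdAddChar a)]
    refine Finset.sum_congr rfl fun σ _ ↦ ?_
    rw [mul_comm, ZMod.stdAddChar_apply, ZMod.toCircle_apply]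
  -- LHS computation
  calc ∑ σ : (ZMod n)ˣ,
      χ (σ : ZMod n) * expZeta ((((u * (σ : ZMod n)).val : ℝ) / n : ℝ) : UnitAddCircle) s
      = ∑ σ : (ZMod n)ˣ, χ (σ : ZMod n) *
          ZMod.LFunction (fun k ↦ ZMod.stdAddChar (u * (σ : ZMod n) * k)) s := by
        refine Finset.sum_congr rfl fun σ _ ↦ ?_
        rw [ZMod.LFunction_stdAddChar_eq_expZeta _ _ (Or.inr hs), ZMod.toAddCircle_apply]
    _ = ZMod.LFunction
          (fun j ↦ ∑ σ : (ZMod n)ˣ, χ (σ : ZMod n) * ZMod.stdAddChar (u * (σ : ZMod n) * j)) s :=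
        LFunction_weighted_sum _ _ _ _
    _ = ZMod.LFunction (fun j ↦ χ⁻¹ u * gaussSum χ ZMod.stdAddChar * χ⁻¹ j) s := by
        congr 1 with j
        rw [mulchar_sum_units χ (fun a ↦ ZMod.stdAddChar (u * a * j))]
        have : ∑ a : ZMod n, χ a * ZMod.stdAddChar (u * a * j)
            = gaussSum χ (AddChar.mulShift ZMod.stdAddChar (u * j)) := by
          refine Finset.sum_congr rfl fun a _ ↦ ?_
          rw [AddChar.mulShift_apply]
          ring_nf
        rw [this, gaussSum_mulShift_of_isPrimitive _ hχ, map_mul]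
        ring
    _ = (gaussSum χ ZMod.stdAddChar) * (starRingEnd ℂ) (χ u)
          * ZMod.LFunction (fun j ↦ χ⁻¹ j) s := by
        have : (fun j : ZMod n ↦ χ⁻¹ u * gaussSum χ ZMod.stdAddChar * χ⁻¹ j)
            = fun j ↦ (χ⁻¹ u * gaussSum χ ZMod.stdAddChar) • (fun k : ZMod n ↦ χ⁻¹ k) j := by
          funext j; simp [smul_eq_mul]
        rw [this]
        have hsmul : ∀ (c : ℂ) (Φ : ZMod n → ℂ),
            ZMod.LFunction (fun j ↦ c • Φ j) s = c * ZMod.LFunction Φ s := by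
          intro c Φ
          simp only [ZMod.LFunction, Finset.mul_sum, smul_eq_mul]
          exact Finset.sum_congr rfl fun j _ ↦ by ring
        rw [hsmul]
        have hconj : (starRingEnd ℂ) (χ u) = χ⁻¹ u := MulChar.star_apply' χ u
        rw [hconj]
        ring
    _ = (∑ σ : (ZMod n)ˣ,
            Complex.exp (2 * Real.pi * Complex.I * (((σ : ZMod n)).val : ℂ) / n) *
              χ (σ : ZMod n)) *
          (starRingEnd ℂ) (χ u) *
          DirichletCharacter.LFunction (χ.ringHomComp (starRingEnd ℂ)) s := by
        rw [hgauss, DirichletCharacter.LFunction, hstar]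
end

section
/- Let n ≥ 1, let χ be a primitive Dirichlet character modulo n, let u ∈ ℤ/nℤ, and let l ≥ 1 be an integer. Then ∑_{σ ∈ (ℤ/nℤ)ˣ} χ(σ) · ( 2·ζ_L′(e^{2πi uσ/n}, 1−l) + H_{l−1} · ζ_L(e^{2πi uσ/n}, 1−l) ) = τ(χ) · χ̄(u) · ( 2·L′(χ̄, 1−l) + H_{l−1} · L(χ̄, 1−l) ), where ζ_L′ and L′ denote derivatives with respect to s of the analytically continued Lerch zeta function and Dirichlet L-function, H_{l−1} = 1 + 1/2 + ⋯ + 1/(l−1) is the (l−1)-st harmonic number (H_0 = 0), and τ(χ) = ∑_{σ ∈ (ℤ/nℤ)ˣ} e^{2πiσ/n} χ(σ). -/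
/-!
Each `expZeta` at the rational point `uσ/n` is the `L`-function of the additive character
`k ↦ e^{2πiuσk/n}`, and `L`-functions of periodic sequences are linear in the sequence. For
primitive `χ` the twisted sum `∑_σ χ(σ) e^{2πiuσk/n}` is the Gauss sum `τ(χ) χ̄(uk)`, so the
`χ`-weighted sum of Lerch zeta functions equals `τ(χ) χ̄(u) L(χ̄, s)` as holomorphic functions on
`s ≠ 1`. Differentiating this identity gives the statement.
-/

open Complex HurwitzZeta Finset ZMod

lemma MulChar.sum_units_mul {M R : Type*} [CommMonoid M] [Fintype M] [DecidableEq M]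
    [CommSemiring R] (χ : MulChar M R) (f : M → R) :
    ∑ σ : Mˣ, χ σ * f σ = ∑ a, χ a * f a :=
  Fintype.sum_of_injective _ Units.val_injective _ _
    (fun a ha ↦ by rw [χ.map_nonunit ha, zero_mul]) (fun _ ↦ rfl)

namespace ZMod

variable {N : ℕ} [NeZero N]

lemma LFunction_const_mul (c : ℂ) (Φ : ZMod N → ℂ) (s : ℂ) :
    LFunction (fun k ↦ c * Φ k) s = c * LFunction Φ s := by
  simp only [LFunction, mul_sum, mul_assoc, mul_left_comm c]

lemma LFunction_sum {ι : Type*} (t : Finset ι) (Φ : ι → ZMod N → ℂ) (s : ℂ) :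
    LFunction (fun k ↦ ∑ i ∈ t, Φ i k) s = ∑ i ∈ t, LFunction (Φ i) s := by
  simp only [LFunction, mul_sum, sum_mul]
  exact sum_comm

end ZMod

namespace DirichletCharacter

variable {N : ℕ} [NeZero N] {χ : DirichletCharacter ℂ N}

lemma sum_units_exp_mul_eq_gaussSum :
    ∑ σ : (ZMod N)ˣ, exp (2 * Real.pi * I * ((σ : ZMod N).val : ℂ) / N) * χ σ
      = gaussSum χ stdAddChar := by
  rw [gaussSum, ← χ.sum_units_mul]
  exact sum_congr rfl fun σ _ ↦ by rw [stdAddChar_apply, toCircle_apply, mul_comm]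

lemma IsPrimitive.sum_mul_expZeta (hχ : χ.IsPrimitive) (u : ZMod N) {s : ℂ} (hs : s ≠ 1) :
    ∑ a, χ a * expZeta (toAddCircle (u * a)) s
      = gaussSum χ stdAddChar * χ⁻¹ u * LFunction χ⁻¹ s := by
  have twisted_sum (k : ZMod N) :
      ∑ a, χ a * stdAddChar (u * a * k) = gaussSum χ stdAddChar * χ⁻¹ u * χ⁻¹ k := by
    rw [mul_assoc, ← map_mul, mul_comm (gaussSum _ _), ← gaussSum_mulShift_of_isPrimitive _ hχ,
      gaussSum]
    exact sum_congr rfl fun a _ ↦ by rw [AddChar.mulShift_apply, mul_right_comm]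
  calc ∑ a, χ a * expZeta (toAddCircle (u * a)) s
      = ∑ a, χ a * ZMod.LFunction (fun k ↦ stdAddChar (u * a * k)) s := by
        simp only [LFunction_stdAddChar_eq_expZeta _ _ (.inr hs)]
    _ = ZMod.LFunction (fun k ↦ ∑ a, χ a * stdAddChar (u * a * k)) s := by
        simp only [ZMod.LFunction_sum, ZMod.LFunction_const_mul]
    _ = gaussSum χ stdAddChar * χ⁻¹ u * LFunction χ⁻¹ s := by
        simp only [twisted_sum, ZMod.LFunction_const_mul, LFunction]

lemma IsPrimitive.sum_mul_deriv_expZeta (hχ : χ.IsPrimitive) (u : ZMod N) {s : ℂ}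
    (hs : s ≠ 1) :
    ∑ a, χ a * deriv (expZeta (toAddCircle (u * a))) s
      = gaussSum χ stdAddChar * χ⁻¹ u * deriv (LFunction χ⁻¹) s := by
  have hdiff (a : ZMod N) : DifferentiableAt ℂ (expZeta (toAddCircle (u * a))) s :=
    differentiableAt_expZeta _ _ (.inl hs)
  have heq : (fun t ↦ ∑ a, χ a * expZeta (toAddCircle (u * a)) t)
      =ᶠ[nhds s] fun t ↦ gaussSum χ stdAddChar * χ⁻¹ u * LFunction χ⁻¹ t :=
    Filter.eventuallyEq_of_mem (isOpen_ne.mem_nhds hs) fun t ht ↦ hχ.sum_mul_expZeta u ht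
  calc ∑ a, χ a * deriv (expZeta (toAddCircle (u * a))) s
      = deriv (fun t ↦ ∑ a, χ a * expZeta (toAddCircle (u * a)) t) s := by
        rw [deriv_fun_sum fun a _ ↦ (hdiff a).const_mul _]
        exact sum_congr rfl fun a _ ↦ (deriv_const_mul _ (hdiff a)).symm
    _ = gaussSum χ stdAddChar * χ⁻¹ u * deriv (LFunction χ⁻¹) s := by
        rw [heq.deriv_eq, deriv_const_mul _ (differentiableAt_LFunction _ _ (.inl hs))]

end DirichletCharacter

theorem gauss_sum_lerch_deriv_general
    (n : ℕ) [NeZero n]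
    (χ : DirichletCharacter ℂ n) (hχ : χ.IsPrimitive)
    (u : ZMod n) (l : ℕ) (hl : 1 ≤ l) :
    ∑ σ : (ZMod n)ˣ,
        χ (σ : ZMod n) *
          (2 * deriv (expZeta ((((u * (σ : ZMod n)).val : ℝ) / n : ℝ) : UnitAddCircle))
              (1 - (l : ℂ)) +
            (harmonic (l - 1) : ℂ) *
              expZeta ((((u * (σ : ZMod n)).val : ℝ) / n : ℝ) : UnitAddCircle) (1 - (l : ℂ)))
      = (∑ σ : (ZMod n)ˣ,
            Complex.exp (2 * Real.pi * Complex.I * (((σ : ZMod n)).val : ℂ) / n) *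
              χ (σ : ZMod n)) *
          (starRingEnd ℂ) (χ u) *
          (2 * deriv (DirichletCharacter.LFunction (χ.ringHomComp (starRingEnd ℂ)))
              (1 - (l : ℂ)) +
            (harmonic (l - 1) : ℂ) *
              DirichletCharacter.LFunction (χ.ringHomComp (starRingEnd ℂ)) (1 - (l : ℂ))) := by
  have hs : 1 - (l : ℂ) ≠ 1 := by
    simpa [sub_eq_self] using Nat.one_le_iff_ne_zero.mp hl
  have conj_eq_inv : χ.ringHomComp (starRingEnd ℂ) = χ⁻¹ := χ.star_eq_inv
  simp only [← toAddCircle_apply, mul_add, mul_left_comm (χ _), sum_add_distrib, ← mul_sum,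
    χ.sum_units_mul fun a ↦ deriv (expZeta (toAddCircle (u * a))) (1 - (l : ℂ)),
    χ.sum_units_mul fun a ↦ expZeta (toAddCircle (u * a)) (1 - (l : ℂ)),
    hχ.sum_mul_deriv_expZeta u hs, hχ.sum_mul_expZeta u hs,
    DirichletCharacter.sum_units_exp_mul_eq_gaussSum, starRingEnd_apply, MulChar.star_apply',
    conj_eq_inv]
  ring

/-- For a primitive Dirichlet character `χ` modulo `n`, every `u : ℤ/nℤ` and every
integer `l ≥ 1`:
`∑_{σ ∈ (ℤ/nℤ)ˣ} χ(σ) (2 ζ_L'(e^{2πiuσ/n}, 1-l) + H_{l-1} ζ_L(e^{2πiuσ/n}, 1-l))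
  = τ(χ) · conj(χ(u)) · (2 L'(conj χ, 1-l) + H_{l-1} L(conj χ, 1-l))`,
with `ζ_L` the analytically continued Lerch zeta function (`expZeta`), `L` the
analytically continued Dirichlet `L`-function, `'` the derivative in `s`,
`H_{l-1}` the `(l-1)`-st harmonic number and `τ(χ)` the Gauss sum. -/
theorem gauss_sum_lerch_deriv
    (n : ℕ) [NeZero n] (hn : 1 ≤ n)
    (χ : DirichletCharacter ℂ n) (hχ : χ.IsPrimitive)
    (u : ZMod n) (l : ℕ) (hl : 1 ≤ l) :
    ∑ σ : (ZMod n)ˣ,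
        χ (σ : ZMod n) *
          (2 * deriv (expZeta ((((u * (σ : ZMod n)).val : ℝ) / n : ℝ) : UnitAddCircle))
              (1 - (l : ℂ)) +
            (harmonic (l - 1) : ℂ) *
              expZeta ((((u * (σ : ZMod n)).val : ℝ) / n : ℝ) : UnitAddCircle) (1 - (l : ℂ)))
      = (∑ σ : (ZMod n)ˣ,
            Complex.exp (2 * Real.pi * Complex.I * (((σ : ZMod n)).val : ℂ) / n) *
              χ (σ : ZMod n)) *
          (starRingEnd ℂ) (χ u) *
          (2 * deriv (DirichletCharacter.LFunction (χ.ringHomComp (starRingEnd ℂ)))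
              (1 - (l : ℂ)) +
            (harmonic (l - 1) : ℂ) *
              DirichletCharacter.LFunction (χ.ringHomComp (starRingEnd ℂ)) (1 - (l : ℂ))) :=
  gauss_sum_lerch_deriv_general n χ hχ u l hl
end

section
/- Let K and L be number fields with rings of integers 𝒪_K and 𝒪_L, and suppose that the number of ℚ-algebra homomorphisms from K to L equals [K:ℚ]. Let d_K ∈ ℤ be the discriminant of K. Consider the 𝒪_L-algebra homomorphism Φ : 𝒪_L ⊗_ℤ 𝒪_K → ∏_{σ : K →_ℚ L} 𝒪_L determined by l ⊗ k ↦ (l·σ(k))_σ (each σ maps 𝒪_K into 𝒪_L). Then Φ becomes an isomorphism after inverting d_K: the induced map ℤ[1/d_K] ⊗_ℤ (𝒪_L ⊗_ℤ 𝒪_K) → ℤ[1/d_K] ⊗_ℤ ∏_{σ} 𝒪_L is bijective. -/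
open scoped TensorProduct
open NumberField

/-!
Choose a `ℤ`-basis `b` of `𝓞 K` and index the embeddings `σ : K →ₐ[ℚ] L` by the same set. In the
induced `𝓞 L`-bases the matrix of `Φ` is `N = (σᵢ(bⱼ))`. Since `Tr_{K/ℚ} = ∑ σ`, the product `Nᵀ N`
is the trace matrix of `b`, so `(det N)² = d_K`. The adjugate of `N` therefore yields a map `Ψ`
with `Φ ∘ Ψ` and `Ψ ∘ Φ` both multiplication by `d_K`, which is invertible over `ℤ[1/d_K]`.
-/

namespace LinearMap

theorem exists_comp_eq_det_toMatrix_smul {S M N κ : Type*} [CommRing S] [AddCommMonoid M]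
    [Module S M] [AddCommMonoid N] [Module S N] [Fintype κ] [DecidableEq κ]
    (bM : Module.Basis κ S M) (bN : Module.Basis κ S N) (f : M →ₗ[S] N) :
    ∃ g : N →ₗ[S] M, (∀ y, f (g y) = (toMatrix bM bN f).det • y) ∧
      ∀ x, g (f x) = (toMatrix bM bN f).det • x := by
  set A := toMatrix bM bN f
  have hf : f = Matrix.toLin bM bN A := (Matrix.toLin_toMatrix bM bN f).symm
  refine ⟨Matrix.toLin bN bM A.adjugate, fun y => ?_, fun x => ?_⟩
  · rw [hf, ← Matrix.toLin_mul_apply, Matrix.mul_adjugate, map_smul, Matrix.toLin_one]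
    rfl
  · rw [hf, ← Matrix.toLin_mul_apply, Matrix.adjugate_mul, map_smul, Matrix.toLin_one]
    rfl

theorem bijective_baseChange_of_comp_eq_smul {R A M N : Type*} [CommSemiring R]
    [CommSemiring A] [Algebra R A] [AddCommMonoid M] [Module R M] [AddCommMonoid N] [Module R N]
    {f : M →ₗ[R] N} {g : N →ₗ[R] M} {r : R} (hr : IsUnit (algebraMap R A r))
    (hfg : ∀ y, f (g y) = r • y) (hgf : ∀ x, g (f x) = r • x) :
    Function.Bijective (f.baseChange A) := by
  have hfg' : f.baseChange A ∘ₗ g.baseChange A = r • id := by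
    rw [← baseChange_comp, show f ∘ₗ g = r • id from ext hfg, baseChange_smul, baseChange_id]
  have hgf' : g.baseChange A ∘ₗ f.baseChange A = r • id := by
    rw [← baseChange_comp, show g ∘ₗ f = r • id from ext hgf, baseChange_smul, baseChange_id]
  constructor
  · refine .of_comp (f := g.baseChange A) ?_
    rw [← coe_comp, hgf']
    convert hr.smul_bijective.injective (β := A ⊗[R] M) using 1
    exact funext fun z => (algebraMap_smul A r z).symm
  · refine .of_comp (g := g.baseChange A) ?_
    rw [← coe_comp, hfg']
    convert hr.smul_bijective.surjective (β := A ⊗[R] N) using 1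
    exact funext fun z => (algebraMap_smul A r z).symm

end LinearMap

theorem Algebra.TensorProduct.coe_map_id_eq_baseChange {R A B C : Type*} [CommSemiring R]
    [Semiring A] [Algebra R A] [Semiring B] [Algebra R B] [Semiring C] [Algebra R C]
    (f : B →ₐ[R] C) :
    ⇑(Algebra.TensorProduct.map (AlgHom.id R A) f) = ⇑(f.toLinearMap.baseChange A) := by
  ext x
  induction x using TensorProduct.induction_on with
  | zero => simp
  | tmul a m => simp
  | add x y hx hy => simp only [map_add, hx, hy]

section Trace

variable {F K L : Type*} [Field F] [Field K] [Field L] [Algebra F K] [Algebra F L]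
  [FiniteDimensional F K] [Algebra.IsSeparable F K]

theorem Algebra.algebraMap_trace_eq_sum_algHom_of_card_eq
    (h : Nat.card (K →ₐ[F] L) = Module.finrank F K) (x : K) :
    algebraMap F L (Algebra.trace F K x) = ∑ σ : K →ₐ[F] L, σ x := by
  -- By `h`, composing with `L → L̄` hits every embedding of `K` into an algebraic closure.
  let E := AlgebraicClosure L
  let ι : L →ₐ[F] E := IsScalarTower.toAlgHom F L E
  have hcomp : Function.Bijective (ι.comp : (K →ₐ[F] L) → (K →ₐ[F] E)) := by
    refine (Fintype.bijective_iff_injective_and_card _).2 ⟨fun σ τ hστ => ?_, ?_⟩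
    · exact AlgHom.ext fun x => ι.toRingHom.injective (DFunLike.congr_fun hστ x)
    · rw [AlgHom.card F K E, ← h, Nat.card_eq_fintype_card]
  apply (algebraMap L E).injective
  rw [← IsScalarTower.algebraMap_apply, trace_eq_sum_embeddings E, map_sum]
  exact (Fintype.sum_bijective _ hcomp _ _ fun σ => rfl).symm

end Trace

namespace NumberField.RingOfIntegers

variable {K L : Type*} [Field K] [NumberField K] [Field L] [NumberField L]

theorem algebraMap_trace_eq_sum_mapRingHom (h : Nat.card (K →ₐ[ℚ] L) = Module.finrank ℚ K)
    (x : 𝓞 K) :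
    algebraMap ℤ (𝓞 L) (Algebra.trace ℤ (𝓞 K) x) = ∑ σ : K →ₐ[ℚ] L, mapRingHom σ x := by
  apply coe_injective
  have := Algebra.algebraMap_trace_eq_sum_algHom_of_card_eq h (x : K)
  rw [← Algebra.coe_trace_int] at this
  simpa using this

theorem algebraMap_discr_eq_det_sq (h : Nat.card (K →ₐ[ℚ] L) = Module.finrank ℚ K)
    {κ : Type*} [Fintype κ] [DecidableEq κ] (b : Module.Basis κ ℤ (𝓞 K))
    (e : κ ≃ (K →ₐ[ℚ] L)) :
    algebraMap ℤ (𝓞 L) (Algebra.discr ℤ b) =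
      (Matrix.of fun i j => mapRingHom (e i) (b j)).det ^ 2 := by
  set N : Matrix κ κ (𝓞 L) := Matrix.of fun i j => mapRingHom (e i) (b j)
  have htrace : (Algebra.traceMatrix ℤ b).map (algebraMap ℤ (𝓞 L)) = N.transpose * N := by
    ext i j
    rw [Matrix.map_apply, Algebra.traceMatrix_apply, Algebra.traceForm_apply,
      algebraMap_trace_eq_sum_mapRingHom h, Matrix.mul_apply, ← e.sum_comp]
    simp [N]
  rw [Algebra.discr_def, RingHom.map_det, RingHom.mapMatrix_apply, htrace, Matrix.det_mul,
    Matrix.det_transpose, sq]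

theorem toMatrix_tensorProduct_basis (Φ : (𝓞 L ⊗[ℤ] 𝓞 K) →ₐ[𝓞 L] ((K →ₐ[ℚ] L) → 𝓞 L))
    (hΦ : ∀ (l : 𝓞 L) (k : 𝓞 K), Φ (l ⊗ₜ[ℤ] k) = fun σ : K →ₐ[ℚ] L => l * mapRingHom σ k)
    {κ : Type*} [Fintype κ] [DecidableEq κ] (b : Module.Basis κ ℤ (𝓞 K))
    (e : κ ≃ (K →ₐ[ℚ] L)) :
    LinearMap.toMatrix (Algebra.TensorProduct.basis (𝓞 L) b)
        ((Pi.basisFun (𝓞 L) _).reindex e.symm) Φ.toLinearMap =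
      Matrix.of fun i j => mapRingHom (e i) (b j) := by
  ext i j
  simp [LinearMap.toMatrix_apply, hΦ]

end NumberField.RingOfIntegers

/-- Let `K`, `L` be number fields such that the number of `ℚ`-algebra homomorphisms
`K → L` equals `[K:ℚ]`, and let `d_K` be the discriminant of `K`. Then the
`𝒪_L`-algebra homomorphism `Φ : 𝒪_L ⊗_ℤ 𝒪_K → ∏_{σ : K →_ℚ L} 𝒪_L` determined by
`l ⊗ k ↦ (l·σ(k))_σ` becomes an isomorphism after inverting `d_K`: the map obtained
from `Φ` by base change along `ℤ → ℤ[1/d_K]` is bijective. -/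
theorem ringOfIntegers_tensor_bijective_away_discr
    (K L : Type*) [Field K] [NumberField K] [Field L] [NumberField L]
    (h : Nat.card (K →ₐ[ℚ] L) = Module.finrank ℚ K)
    (Φ : ((𝓞 L) ⊗[ℤ] (𝓞 K)) →ₐ[𝓞 L] ((K →ₐ[ℚ] L) → 𝓞 L))
    (hΦ : ∀ (l : 𝓞 L) (k : 𝓞 K),
        Φ (l ⊗ₜ[ℤ] k) = fun (σ : K →ₐ[ℚ] L) => l * RingOfIntegers.mapRingHom σ.toRingHom k) :
    Function.Bijective
      (Algebra.TensorProduct.map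
        (AlgHom.id ℤ (Localization.Away (discr K)))
        Φ.toRingHom.toIntAlgHom) := by
  classical
  let b := RingOfIntegers.basis K
  let e : _ ≃ (K →ₐ[ℚ] L) := Fintype.equivOfCardEq <| by
    rw [← Module.finrank_eq_card_chooseBasisIndex (R := ℤ) (M := 𝓞 K), RingOfIntegers.rank,
      ← h, Nat.card_eq_fintype_card]
  let bT := Algebra.TensorProduct.basis (𝓞 L) b
  let bP := (Pi.basisFun (𝓞 L) (K →ₐ[ℚ] L)).reindex e.symm
  have hd :
      algebraMap ℤ (𝓞 L) (discr K) = (LinearMap.toMatrix bT bP Φ.toLinearMap).det ^ 2 := by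
    rw [RingOfIntegers.toMatrix_tensorProduct_basis Φ hΦ b e,
      ← RingOfIntegers.algebraMap_discr_eq_det_sq h b e]
  obtain ⟨g, hΦg, hgΦ⟩ := LinearMap.exists_comp_eq_det_toMatrix_smul bT bP Φ.toLinearMap
  set d := (LinearMap.toMatrix bT bP Φ.toLinearMap).det
  rw [Algebra.TensorProduct.coe_map_id_eq_baseChange]
  refine LinearMap.bijective_baseChange_of_comp_eq_smul (g := (d • g).restrictScalars ℤ)
    (IsLocalization.Away.algebraMap_isUnit (discr K)) (fun y => ?_) (fun x => ?_)
  · change Φ (d • g y) = _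
    rw [← algebraMap_smul (𝓞 L) (discr K), hd, sq, mul_smul, ← hΦg y, map_smul]
    rfl
  · change d • g (Φ x) = _
    rw [← algebraMap_smul (𝓞 L) (discr K), hd, sq, mul_smul, ← hgΦ x]
    rfl
end

section
/- Let n ≥ 1, let F = ℚ(ζ_n) be the n-th cyclotomic field with ring of integers 𝒪_F, and let ζ ∈ 𝒪_F be a primitive n-th root of unity. Let K be a subfield of F and let 𝒪_K be its ring of integers, and set d = [F : K]. Then 𝒪_F is a free 𝒪_K-module of rank d, with basis 1, ζ, ζ², …, ζ^{d−1}. -/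
/-!
Since `𝓞_F = ℤ[ζ]`, the element `ζ` generates `𝓞_F` as an `𝓞_K`-algebra. Over the integrally
closed ring `𝓞_K` the minimal polynomial of an integral generator presents the algebra, so the
powers of `ζ` form a power basis; its length is the rank of `𝓞_F` over `𝓞_K`, which equals
`[F : K]` after passing to fraction fields.
-/

open NumberField

theorem exists_basis_pow_of_adjoin_singleton_eq_top {R S : Type*} [CommRing R] [IsDomain R]
    [IsIntegrallyClosed R] [CommRing S] [IsDomain S] [Algebra R S] [Module.IsTorsionFree R S]
    {x : S} (hx : IsIntegral R x) (hx' : Algebra.adjoin R {x} = ⊤) :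
    ∃ b : Module.Basis (Fin (Module.finrank R S)) R S, ∀ i, b i = x ^ (i : ℕ) := by
  let P := PowerBasis.ofAdjoinEqTop' hx hx'
  refine ⟨P.basis.reindex (finCongr P.finrank.symm), fun i => ?_⟩
  rw [Module.Basis.reindex_apply, P.basis_eq_pow, PowerBasis.ofAdjoinEqTop'_gen]
  rfl

theorem Algebra.adjoin_eq_top_of_adjoin_int_eq_top {R A : Type*} [CommRing R] [CommRing A]
    [Algebra R A] {s : Set A} (hs : Algebra.adjoin ℤ s = ⊤) : Algebra.adjoin R s = ⊤ := by
  rw [← Algebra.adjoin_adjoin_of_tower ℤ, hs, Algebra.coe_top, Algebra.adjoin_univ]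

theorem IsCyclotomicExtension.Rat.adjoin_int_eq_top_of_ringOfIntegers {n : ℕ} [NeZero n]
    {F : Type*} [Field F] [NumberField F] [IsCyclotomicExtension {n} ℚ F] {ζ : 𝓞 F}
    (hζ : IsPrimitiveRoot ζ n) : Algebra.adjoin ℤ {ζ} = ⊤ := by
  have hζF : IsPrimitiveRoot (ζ : F) n := hζ.map_of_injective RingOfIntegers.coe_injective
  simpa using IsCyclotomicExtension.Rat.adjoin_singleton_eq_top hζF

theorem ringOfIntegers_cyclotomic_free_over_subfield_general
    (n : ℕ+) (F : Type*) [Field F] [NumberField F]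
    [IsCyclotomicExtension {(n : ℕ)} ℚ F]
    (K : Type*) [Field K] [NumberField K] [Algebra K F]
    (ζ : 𝓞 F) (hζ : IsPrimitiveRoot ζ n) :
    ∃ b : Module.Basis (Fin (Module.finrank K F)) (𝓞 K) (𝓞 F),
      ∀ i : Fin (Module.finrank K F), b i = ζ ^ (i : ℕ) := by
  rw [IsFractionRing.finrank_eq (𝓞 K) K (𝓞 F) F]
  exact exists_basis_pow_of_adjoin_singleton_eq_top ((hζ.isIntegral n.pos).tower_top)
    (Algebra.adjoin_eq_top_of_adjoin_int_eq_top
      (IsCyclotomicExtension.Rat.adjoin_int_eq_top_of_ringOfIntegers hζ))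

/-- Let `F = ℚ(ζ_n)` be the `n`-th cyclotomic field, `ζ ∈ 𝒪_F` a primitive `n`-th
root of unity, and `K ⊆ F` a subfield with ring of integers `𝒪_K`. Setting
`d = [F : K]`, the ring `𝒪_F` is a free `𝒪_K`-module of rank `d`, with basis
`1, ζ, ζ², …, ζ^{d-1}`. -/
theorem ringOfIntegers_cyclotomic_free_over_subfield
    (n : ℕ+) (F : Type*) [Field F] [NumberField F]
    [IsCyclotomicExtension {(n : ℕ)} ℚ F]
    (K : Type*) [Field K] [NumberField K] [Algebra K F] [IsScalarTower ℚ K F]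
    (ζ : 𝓞 F) (hζ : IsPrimitiveRoot ζ n) :
    ∃ b : Module.Basis (Fin (Module.finrank K F)) (𝓞 K) (𝓞 F),
      ∀ i : Fin (Module.finrank K F), b i = ζ ^ (i : ℕ) :=
  ringOfIntegers_cyclotomic_free_over_subfield_general n F K ζ hζ
end
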